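/- Consider the map s sending a unit vector v ∈ ℝ³ to the symmetric matrix s(v) = 1 − 3·(v vᵀ), where v vᵀ is the rank-one outer product (the orthogonal projection onto the line of v). Then: (a) the image of s on the unit sphere is exactly the orbit {g * diag(1,1,−2) * gᵀ : g ∈ SO(3)}; (b) for unit vectors v, w one has s(v) = s(w) if and only if v = w or v = −w. (Hence the orbit of diag(1,1,−2) is a bijective image of the real projective plane, parameterized by the axis of the eigenvalue −2.) -/

import Mathlib

/-!
For orthogonal `g`, `g * diag(1,1,-2) * gᵀ = 1 - 3 (g e₂)(g e₂)ᵀ`, so the orbit is the image of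
the unit vectors of the form `g e₂`. Every unit vector `v` has this form with `g` in `SO(n)`:
compose the Householder reflection exchanging `e₂` and `v` with one fixing `e₂`. Finally
`v vᵀ = w wᵀ` forces `v = ±w`: applying both sides to `v` and `w` gives `a v = b w` and
`b v = a w` with `a = |v|² = |w|²` and `b = v ⬝ w`, hence `a² = b²`.
-/

open Matrix

namespace Matrix

section Householder

variable {K : Type*} [Field K] {n : Type*} [Fintype n] [DecidableEq n]

/-- For `u ⬝ᵥ u = 0` this is `1`, since `2 / 0 = 0`. -/
def householder (u : n → K) : Matrix n n K := 1 - (2 / (u ⬝ᵥ u)) • vecMulVec u u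

lemma householder_transpose (u : n → K) : (householder u)ᵀ = householder u := by
  simp [householder, transpose_vecMulVec]

lemma householder_mulVec (u x : n → K) :
    householder u *ᵥ x = x - (2 * (u ⬝ᵥ x) / (u ⬝ᵥ u)) • u := by
  simp only [householder, sub_mulVec, one_mulVec, smul_mulVec, vecMulVec_mulVec,
    op_smul_eq_smul, smul_smul, sub_right_inj]
  ring_nf

lemma householder_mul_self (u : n → K) : householder u * householder u = 1 := by
  have hP : vecMulVec u u * vecMulVec u u = (u ⬝ᵥ u) • vecMulVec u u := by
    rw [vecMulVec_mul_vecMulVec, vecMulVec_smul]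
  have hc : 2 / (u ⬝ᵥ u) * (2 / (u ⬝ᵥ u)) * (u ⬝ᵥ u) = 2 * (2 / (u ⬝ᵥ u)) := by
    rcases eq_or_ne (u ⬝ᵥ u) 0 with h | h
    · simp [h]
    · field_simp
  simp only [householder, sub_mul, mul_sub, one_mul, mul_one, smul_mul_smul_comm, hP, smul_smul]
  linear_combination (norm := module) hc • vecMulVec u u

lemma det_householder {u : n → K} (hu : u ⬝ᵥ u ≠ 0) : (householder u).det = -1 := by
  have : householder u = 1 + vecMulVec (-(2 / (u ⬝ᵥ u)) • u) u := by
    rw [householder, smul_vecMulVec, neg_smul, sub_eq_add_neg]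
  rw [this, vecMulVec_eq Unit, det_one_add_replicateCol_mul_replicateRow, dotProduct_smul,
    smul_eq_mul]
  field_simp
  ring

lemma householder_mulVec_of_dotProduct_eq_zero {u x : n → K} (h : u ⬝ᵥ x = 0) :
    householder u *ᵥ x = x := by
  simp [householder_mulVec, h]

lemma householder_sub_mulVec {x y : n → K} (hxy : (x - y) ⬝ᵥ (x - y) ≠ 0)
    (h : x ⬝ᵥ x = y ⬝ᵥ y) : householder (x - y) *ᵥ x = y := by
  have : 2 * ((x - y) ⬝ᵥ x) = (x - y) ⬝ᵥ (x - y) := by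
    simp only [sub_dotProduct, dotProduct_sub, dotProduct_comm y x, h]; ring
  rw [householder_mulVec, this, div_self hxy, one_smul, sub_sub_cancel]

end Householder

section CommRing

variable {R : Type*} [CommRing R] {m n : Type*} [Fintype n]

lemma mul_vecMulVec_mul_transpose (g : Matrix m n R) (x y : n → R) :
    g * vecMulVec x y * gᵀ = vecMulVec (g *ᵥ x) (g *ᵥ y) := by
  rw [mul_vecMulVec, vecMulVec_mul, vecMul_transpose]

lemma dotProduct_mulVec_mulVec_of_mul_transpose_eq_one [DecidableEq n] {g : Matrix n n R}
    (hg : g * gᵀ = 1) (x y : n → R) : (g *ᵥ x) ⬝ᵥ (g *ᵥ y) = x ⬝ᵥ y := by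
  rw [dotProduct_mulVec, ← mulVec_transpose, mulVec_mulVec, mul_eq_one_comm.mp hg, one_mulVec]

end CommRing

section OrderedField

variable {K : Type*} [Field K] [LinearOrder K] [IsStrictOrderedRing K] {n : Type*} [Fintype n]

theorem exists_orthogonal_det_one_mulVec_single_eq [DecidableEq n] {i j : n} (hij : i ≠ j)
    {v : n → K} (hv : v ⬝ᵥ v = 1) :
    ∃ g : Matrix n n K, g * gᵀ = 1 ∧ g.det = 1 ∧ g *ᵥ Pi.single j 1 = v := by
  by_cases hjv : Pi.single j 1 = v
  · exact ⟨1, by simp, by simp, by simp [hjv]⟩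
  set e : n → K := Pi.single i 1
  set u : n → K := Pi.single j 1 - v
  have hu : u ⬝ᵥ u ≠ 0 := by rwa [Ne, dotProduct_self_eq_zero, sub_eq_zero]
  refine ⟨householder u * householder e, ?_, ?_, ?_⟩
  · rw [transpose_mul, householder_transpose, householder_transpose, Matrix.mul_assoc,
      ← Matrix.mul_assoc (householder e), householder_mul_self, Matrix.one_mul,
      householder_mul_self]
  · rw [det_mul, det_householder hu, det_householder (by simp [e])]
    norm_num
  · rw [← mulVec_mulVec, householder_mulVec_of_dotProduct_eq_zero (u := e) (by simp [e, hij]),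
      householder_sub_mulVec hu (by simp [hv])]

theorem vecMulVec_self_eq_iff {v w : n → K} :
    vecMulVec v v = vecMulVec w w ↔ v = w ∨ v = -w := by
  refine ⟨fun h => ?_, by rintro (rfl | rfl) <;> simp⟩
  have hnorm : v ⬝ᵥ v = w ⬝ᵥ w := by simpa [trace_vecMulVec] using congrArg trace h
  set a := v ⬝ᵥ v
  set b := w ⬝ᵥ v
  have hv : a • v = b • w := by simpa [vecMulVec_mulVec] using congrArg (· *ᵥ v) h
  have hw : b • v = a • w := by
    simpa [vecMulVec_mulVec, b, dotProduct_comm v w, ← hnorm] using congrArg (· *ᵥ w) h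
  rcases eq_or_ne a 0 with ha | ha
  · have hw0 : w ⬝ᵥ w = 0 := hnorm ▸ ha
    exact .inl (by rw [dotProduct_self_eq_zero.mp ha, dotProduct_self_eq_zero.mp hw0])
  have hv0 : v ≠ 0 := fun h0 => ha (by simp [a, h0])
  have hab : (a ^ 2 - b ^ 2) • v = 0 := by
    linear_combination (norm := module) a • hv - b • hw
  obtain hb | hb := sq_eq_sq_iff_eq_or_eq_neg.mp
    (sub_eq_zero.mp ((smul_eq_zero.mp hab).resolve_right hv0))
  · exact .inl (smul_right_injective _ ha (show a • v = a • w by rw [hv, hb]))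
  · exact .inr (smul_right_injective _ ha
      (show a • v = a • -w by rw [hv, hb, neg_smul, smul_neg, neg_neg]))

end OrderedField

lemma diagonal_one_one_neg_two {R : Type*} [Ring R] :
    diagonal (![1, 1, -2] : Fin 3 → R) =
      1 - (3 : R) • vecMulVec (Pi.single 2 1) (Pi.single 2 1) := by
  ext i j
  fin_cases i <;> fin_cases j <;>
    norm_num [vecMulVec_apply, one_apply, Pi.single_apply, Fin.ext_iff]

lemma mul_diagonal_one_one_neg_two_mul_transpose {R : Type*} [CommRing R]
    {g : Matrix (Fin 3) (Fin 3) R} (hg : g * gᵀ = 1) :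
    g * diagonal ![1, 1, -2] * gᵀ =
      1 - (3 : R) • vecMulVec (g *ᵥ Pi.single 2 1) (g *ᵥ Pi.single 2 1) := by
  rw [diagonal_one_one_neg_two, Matrix.mul_sub, Matrix.sub_mul, Matrix.mul_one, hg,
    Matrix.mul_smul, Matrix.smul_mul, mul_vecMulVec_mul_transpose]

end Matrix

/-- The orbit of diag(1,1,−2) is parameterized by the axis of the eigenvalue
−2: the map s(v) = 1 − 3·(v vᵀ) sends the unit sphere onto the orbit, and
identifies exactly antipodal points (so the orbit is a bijective image of
the projective plane). -/
theorem orbit_param_by_projective_plane :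
    ({A : Matrix (Fin 3) (Fin 3) ℝ | ∃ v : Fin 3 → ℝ,
        (∑ i, v i ^ 2) = 1 ∧
        A = (1 : Matrix (Fin 3) (Fin 3) ℝ) - (3 : ℝ) • Matrix.vecMulVec v v}
      =
     {A : Matrix (Fin 3) (Fin 3) ℝ | ∃ g : Matrix (Fin 3) (Fin 3) ℝ,
        g * gᵀ = 1 ∧ g.det = 1 ∧
        A = g * Matrix.diagonal ![1, 1, -2] * gᵀ}) ∧
    ∀ v w : Fin 3 → ℝ, (∑ i, v i ^ 2) = 1 → (∑ i, w i ^ 2) = 1 →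
      (((1 : Matrix (Fin 3) (Fin 3) ℝ) - (3 : ℝ) • Matrix.vecMulVec v v) =
         ((1 : Matrix (Fin 3) (Fin 3) ℝ) - (3 : ℝ) • Matrix.vecMulVec w w) ↔
        v = w ∨ v = -w) := by
  have sum_sq_eq : ∀ v : Fin 3 → ℝ, ∑ i, v i ^ 2 = v ⬝ᵥ v := fun v => by simp [dotProduct, sq]
  refine ⟨Set.ext fun A => ⟨?_, ?_⟩, fun v w _ _ => ?_⟩
  · rintro ⟨v, hv, rfl⟩
    obtain ⟨g, hg, hdet, rfl⟩ := exists_orthogonal_det_one_mulVec_single_eq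
      (i := 0) (j := 2) (by decide) (sum_sq_eq v ▸ hv)
    exact ⟨g, hg, hdet, (mul_diagonal_one_one_neg_two_mul_transpose hg).symm⟩
  · rintro ⟨g, hg, -, rfl⟩
    refine ⟨g *ᵥ Pi.single 2 1, ?_, mul_diagonal_one_one_neg_two_mul_transpose hg⟩
    rw [sum_sq_eq, dotProduct_mulVec_mulVec_of_mul_transpose_eq_one hg]
    simp
  · rw [sub_right_inj, (smul_right_injective _ three_ne_zero).eq_iff, vecMulVec_self_eq_iff]
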